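/- Let $m \geq 5$ with $m \equiv 1 \pmod 3$ and let $P_m$ be the vertex set of a regular $m$-gon inscribed in the unit circle with the geodesic metric. Then for every partition of $P_m$ into three nonempty subsets $X_1, X_2, X_3$, we have $\max_i \operatorname{diam} X_i \geq \frac{2\pi}{3} - \frac{2\pi}{3m}$, and this bound is attained by some partition. -/

import Mathlib

open Real

noncomputable def Pvert (n : ℕ) : Set (AddCircle (2 * π)) :=
  Set.range fun j : Fin n => ((2 * π * j / n : ℝ) : AddCircle (2 * π))

instance (n : ℕ) : Finite (Pvert n) := by unfold Pvert; exact (Set.finite_range _).to_subtype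

/-!
Write `m = 3k + 1`, so that `2π/3 - 2π/(3m) = 2πk/m`, and index the vertices by `j ∈ ℤ`. The
vertices `j`, `j + k`, `j + 2k` are pairwise at distance at least `2πk/m`, so if every part had
diameter below `2πk/m` they would lie in three different parts. Colouring vertices by their part,
the colour of `j + 3k` is then forced to be that of `j`; since `3k ≡ -1 (mod m)`, neighbouring
vertices get the same colour and only one part is used. The bound is attained by the three arcs of
indices `[0, k]`, `[k + 1, 2k]`, `[2k + 1, 3k]`.
-/

theorem periodic_three_nsmul_of_forall_ne {G : Type*} [AddCommMonoid G] {f : G → Fin 3} {k : G}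
    (h₁ : ∀ j, f j ≠ f (j + k)) (h₂ : ∀ j, f j ≠ f (j + 2 • k)) :
    Function.Periodic f (3 • k) := by
  intro j
  have hab := h₁ j
  have hac := h₂ j
  have hbc := h₁ (j + k)
  have hbd := h₂ (j + k)
  have hcd := h₁ (j + 2 • k)
  rw [show j + k + k = j + 2 • k by abel] at hbc
  rw [show j + k + 2 • k = j + 3 • k by abel] at hbd
  rw [show j + 2 • k + k = j + 3 • k by abel] at hcd
  omega

namespace RegularPolygon

noncomputable def vertex (m : ℕ) (j : ℤ) : AddCircle (2 * π) :=
  ((2 * π * j / m : ℝ) : AddCircle (2 * π))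

variable {m : ℕ}

lemma vertex_sub_vertex (a b : ℤ) : vertex m a - vertex m b = vertex m (a - b) := by
  rw [vertex, vertex, vertex, ← AddCircle.coe_sub]
  push_cast
  ring_nf

lemma vertex_eq_vertex_iff [NeZero m] {a b : ℤ} :
    vertex m a = vertex m b ↔ a ≡ b [ZMOD m] := by
  have hm : (m : ℝ) ≠ 0 := NeZero.ne _
  rw [← sub_eq_zero, vertex_sub_vertex, vertex, AddCircle.coe_eq_zero_iff, Int.modEq_comm,
    Int.modEq_iff_dvd]
  refine exists_congr fun n => ?_
  rw [zsmul_eq_mul, eq_div_iff hm, eq_comm,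
    show (n : ℝ) * (2 * π) * m = 2 * π * ((m * n : ℤ) : ℝ) by push_cast; ring,
    mul_right_inj' two_pi_pos.ne', Int.cast_inj]

lemma vertex_periodic [NeZero m] : Function.Periodic (vertex m) m := fun _ =>
  vertex_eq_vertex_iff.mpr (Int.add_modEq_right)

lemma vertex_mem_Pvert [NeZero m] (j : ℤ) : vertex m j ∈ Pvert m := by
  have hm : (0 : ℤ) < m := by have := NeZero.pos m; omega
  refine ⟨⟨(j % m).toNat, by have := Int.emod_lt_of_pos j hm; omega⟩, ?_⟩
  rw [← vertex_eq_vertex_iff.mpr (Int.mod_modEq j m), vertex]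
  dsimp only
  rw [show (((j % m).toNat : ℕ) : ℝ) = ((j % m : ℤ) : ℝ) by
    exact_mod_cast Int.toNat_of_nonneg (Int.emod_nonneg j hm.ne')]

lemma exists_vertex_eq_of_mem_Pvert {x : AddCircle (2 * π)} (hx : x ∈ Pvert m) :
    ∃ j ∈ Set.Ico (0 : ℤ) m, vertex m j = x := by
  obtain ⟨j, rfl⟩ := hx
  exact ⟨j, ⟨by positivity, by exact_mod_cast j.isLt⟩, by simp [vertex]⟩

lemma dist_vertex_le (a b : ℤ) : dist (vertex m a) (vertex m b) ≤ 2 * π * |a - b| / m := by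
  rw [dist_eq_norm, vertex_sub_vertex, vertex]
  refine (QuotientAddGroup.norm_mk_le_norm).trans_eq ?_
  rw [Real.norm_eq_abs, abs_div, abs_mul, abs_of_pos two_pi_pos, Nat.abs_cast]
  push_cast; rfl

lemma dist_vertex {a b : ℤ} (h : 2 * |a - b| ≤ m) :
    dist (vertex m a) (vertex m b) = 2 * π * |a - b| / m := by
  rw [dist_eq_norm, vertex_sub_vertex, vertex,
    (AddCircle.norm_coe_eq_abs_iff _ two_pi_pos.ne').mpr, abs_div, abs_mul, abs_of_pos two_pi_pos,
    Nat.abs_cast]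
  · push_cast; rfl
  · rw [abs_div, abs_mul, abs_of_pos two_pi_pos, Nat.abs_cast]
    rcases Nat.eq_zero_or_pos m with rfl | hm
    · simp [pi_pos.le]
    rw [div_le_iff₀ (by exact_mod_cast hm)]
    have : 2 * |(a : ℝ) - b| ≤ m := by exact_mod_cast h
    push_cast
    nlinarith [mul_le_mul_of_nonneg_left this pi_pos.le]

section Partition

variable {ι : Type*}

def vertexPartition (m : ℕ) (c : ℤ → ι) (i : ι) : Set (Pvert m) :=
  {x | ∃ j ∈ Set.Ico (0 : ℤ) m, c j = i ∧ vertex m j = x}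

lemma pairwise_disjoint_vertexPartition [NeZero m] (c : ℤ → ι) :
    Pairwise (Function.onFun Disjoint (vertexPartition m c)) := by
  intro i i' hii'
  refine Set.disjoint_left.mpr ?_
  rintro x ⟨a, ha, rfl, hax⟩ ⟨b, hb, rfl, hbx⟩
  have hab : a ≡ b [ZMOD m] := vertex_eq_vertex_iff.mp (hax.trans hbx.symm)
  rw [Int.ModEq, Int.emod_eq_of_lt ha.1 ha.2, Int.emod_eq_of_lt hb.1 hb.2] at hab
  exact hii' (congrArg c hab)

lemma iUnion_vertexPartition (c : ℤ → ι) : ⋃ i, vertexPartition m c i = Set.univ := by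
  refine Set.eq_univ_of_forall fun x => Set.mem_iUnion.mpr ?_
  obtain ⟨j, hj, hjx⟩ := exists_vertex_eq_of_mem_Pvert x.2
  exact ⟨c j, j, hj, rfl, hjx⟩

lemma diam_vertexPartition_le {c : ℤ → ι} {ℓ : ℤ} (hℓ : 0 ≤ ℓ)
    (hc : ∀ a ∈ Set.Ico (0 : ℤ) m, ∀ b ∈ Set.Ico (0 : ℤ) m, c a = c b → |a - b| ≤ ℓ)
    (i : ι) :
    Metric.diam (vertexPartition m c i) ≤ 2 * π * ℓ / m := by
  refine Metric.diam_le_of_forall_dist_le (by positivity) ?_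
  rintro x ⟨a, ha, rfl, hax⟩ y ⟨b, hb, hcb, hby⟩
  rw [Subtype.dist_eq, ← hax, ← hby]
  refine (dist_vertex_le a b).trans ?_
  gcongr
  exact_mod_cast hc a ha b hb hcb.symm

lemma vertexPartition_nonempty [NeZero m] {c : ℤ → ι} {i : ι}
    (h : ∃ j ∈ Set.Ico (0 : ℤ) m, c j = i) : (vertexPartition m c i).Nonempty := by
  obtain ⟨j, hj, rfl⟩ := h
  exact ⟨⟨vertex m j, vertex_mem_Pvert j⟩, j, hj, rfl, rfl⟩

end Partition

def threeArcs (k : ℕ) (j : ℤ) : Fin 3 :=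
  if j ≤ k then 0 else if j ≤ 2 * k then 1 else 2

lemma exists_threeArcs_eq {k : ℕ} (hk : 1 ≤ k) (hm : m = 3 * k + 1) (i : Fin 3) :
    ∃ j ∈ Set.Ico (0 : ℤ) m, threeArcs k j = i := by
  fin_cases i
  · exact ⟨0, by simp [threeArcs]; omega⟩
  · exact ⟨k + 1, by simp [threeArcs]; omega⟩
  · exact ⟨2 * k + 1, by simp [threeArcs]; omega⟩

lemma abs_sub_le_of_threeArcs_eq {k : ℕ} (hm : m = 3 * k + 1) {a b : ℤ}
    (ha : a ∈ Set.Ico (0 : ℤ) m) (hb : b ∈ Set.Ico (0 : ℤ) m)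
    (h : threeArcs k a = threeArcs k b) :
    |a - b| ≤ k := by
  simp only [Set.mem_Ico] at ha hb
  rw [abs_sub_le_iff]
  unfold threeArcs at h
  split_ifs at h <;> omega

theorem exists_le_diam_of_partition {k : ℕ} (hk : 1 ≤ k) (hm : m = 3 * k + 1)
    (X : Fin 3 → Set (Pvert m)) (hne : ∀ i, (X i).Nonempty)
    (hdis : Pairwise (Function.onFun Disjoint X)) (hcov : ⋃ i, X i = Set.univ) :
    ∃ i, 2 * π * k / m ≤ Metric.diam (X i) := by
  have : NeZero m := ⟨by omega⟩
  by_contra! hsmall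
  choose c hc using fun x : Pvert m => Set.mem_iUnion.mp (by rw [hcov]; exact Set.mem_univ x)
  let v : ℤ → Pvert m := fun j => ⟨vertex m j, vertex_mem_Pvert j⟩
  have hv : Function.Periodic v m := fun j => Subtype.ext (vertex_periodic j)
  have separated (a b : ℤ) (hab : 2 * π * k / m ≤ dist (vertex m a) (vertex m b)) :
      c (v a) ≠ c (v b) := by
    intro hcab
    have hb := hc (v b)
    rw [← hcab] at hb
    have := Metric.dist_le_diam_of_mem (X _).toFinite.isBounded (hc (v a)) hb
    exact (this.trans_lt (hsmall _)).not_ge hab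
  have h₁ (j : ℤ) : c (v j) ≠ c (v (j + k)) := by
    refine separated _ _ (le_of_eq ?_)
    have hd : |j - (j + k)| = k := by rw [sub_add_cancel_left, abs_neg, Nat.abs_cast]
    rw [dist_vertex (by omega), hd, Int.cast_natCast]
  have h₂ (j : ℤ) : c (v j) ≠ c (v (j + 2 • k)) := by
    rw [← hv.sub_eq (j + 2 • k)]
    refine separated _ _ ?_
    have hd : |j - (j + 2 • (k : ℤ) - m)| = k + 1 := by
      rw [nsmul_eq_mul, abs_eq_self.mpr] <;> omega
    rw [dist_vertex (by omega), hd]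
    gcongr
    push_cast
    linarith
  have hconst : Function.Periodic (c ∘ v) 1 := by
    have := (hv.comp c).sub_period (periodic_three_nsmul_of_forall_ne h₁ h₂)
    rwa [show (m : ℤ) - 3 • (k : ℤ) = 1 by rw [nsmul_eq_mul]; omega] at this
  obtain ⟨i, hi⟩ : ∃ i, i ≠ c (v 0) := ⟨c (v 0) + 1, by omega⟩
  obtain ⟨x, hx⟩ := hne i
  obtain ⟨j, -, hj⟩ := exists_vertex_eq_of_mem_Pvert x.2
  obtain rfl : v j = x := Subtype.ext hj
  have hcx : c (v j) = c (v 0) := by simpa using hconst.int_mul_eq j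
  exact Set.disjoint_left.mp (hdis (hcx ▸ hi)) hx (hc (v j))

end RegularPolygon

open RegularPolygon in
theorem stmt9 (m : ℕ) (hm : 5 ≤ m) (hmod : m % 3 = 1) :
    (∀ X : Fin 3 → Set (Pvert m), (∀ i, (X i).Nonempty) →
      Pairwise (Function.onFun Disjoint X) → (⋃ i, X i) = Set.univ →
      (2 * π / 3 - 2 * π / (3 * m)) ≤ ⨆ i, Metric.diam (X i)) ∧
    (∃ X : Fin 3 → Set (Pvert m), (∀ i, (X i).Nonempty) ∧
      Pairwise (Function.onFun Disjoint X) ∧ (⋃ i, X i) = Set.univ ∧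
      (⨆ i, Metric.diam (X i)) = (2 * π / 3 - 2 * π / (3 * m))) := by
  obtain ⟨k, hmk, hk⟩ : ∃ k, m = 3 * k + 1 ∧ 1 ≤ k := ⟨m / 3, by omega, by omega⟩
  have : NeZero m := ⟨by omega⟩
  have hbound : 2 * π / 3 - 2 * π / (3 * m) = 2 * π * k / m := by
    rw [hmk]; push_cast; field_simp; ring
  have lower (X : Fin 3 → Set (Pvert m)) (hne : ∀ i, (X i).Nonempty)
      (hdis : Pairwise (Function.onFun Disjoint X)) (hcov : ⋃ i, X i = Set.univ) :
      2 * π / 3 - 2 * π / (3 * m) ≤ ⨆ i, Metric.diam (X i) := by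
    obtain ⟨i, hi⟩ := exists_le_diam_of_partition hk hmk X hne hdis hcov
    exact hbound ▸ le_ciSup_of_le (Set.finite_range _).bddAbove i hi
  have hne (i : Fin 3) : (vertexPartition m (threeArcs k) i).Nonempty :=
    vertexPartition_nonempty (exists_threeArcs_eq hk hmk i)
  refine ⟨lower, _, hne, pairwise_disjoint_vertexPartition _, iUnion_vertexPartition _,
    le_antisymm ?_ (lower _ hne (pairwise_disjoint_vertexPartition _) (iUnion_vertexPartition _))⟩
  rw [hbound]
  exact ciSup_le (diam_vertexPartition_le (Nat.cast_nonneg k)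
    fun a ha b hb hab => abs_sub_le_of_threeArcs_eq hmk ha hb hab)
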